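/- For a bipartite pure state |ψ⟩ = Σ_i √s_i |α_i⟩⊗|β_i⟩ in Schmidt form and any unitary U on H_a, letting Π_k = U|α_k⟩⟨α_k|U† be projectors that leave the reduced state ρ_a invariant, one has tr(ρ · Π(ρ)) = Σ_k (⟨α_k|U† ρ_a U|α_k⟩)², where ρ = |ψ⟩⟨ψ| and ρ_a = Σ_i s_i |α_i⟩⟨α_i|. -/

import Mathlib

open Kronecker ComplexOrder Matrix

/-! The measured state is `Σ_k Q_k ρ Q_k` with `Q_k = Π_k ⊗ 1`, so for the pure state `ρ = |ψ⟩⟨ψ|`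
the trace collapses to `Σ_k ⟨ψ|Q_k|ψ⟩²`. Reading `ψ` as the matrix `Ψ = Σ_i √s_i α_i β_iᵀ`,
`⟨ψ|A ⊗ 1|ψ⟩ = tr(A ΨΨ†)`, and orthonormality of the `β_i` gives `ΨΨ† = ρ_a`. Finally
`tr(ρ_a Π_k) = ⟨α_k|U† ρ_a U|α_k⟩` by cyclicity of the trace. -/

namespace Matrix

variable {m n ι R : Type*}

section CommSemiring

variable [Fintype m] [CommSemiring R]

theorem trace_mul_vecMulVec (M : Matrix m m R) (v w : m → R) :
    trace (M * vecMulVec v w) = w ⬝ᵥ M *ᵥ v := by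
  rw [mul_vecMulVec, trace_vecMulVec, dotProduct_comm]

theorem trace_vecMulVec_mul_mul_vecMulVec_mul (u v : m → R) (Q : Matrix m m R) :
    trace (vecMulVec u v * (Q * vecMulVec u v * Q)) = (v ⬝ᵥ Q *ᵥ u) ^ 2 := by
  rw [mul_vecMulVec Q, vecMulVec_mul _ _ Q, vecMulVec_mul_vecMulVec, trace_vecMulVec,
    dotProduct_smul, smul_eq_mul, sq, dotProduct_comm u, ← dotProduct_mulVec]

end CommSemiring

variable [CommRing R] [StarRing R]

theorem star_dotProduct_kronecker_one_mulVec [Fintype m] [Fintype n] [DecidableEq n]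
    (A : Matrix m m R) (ψ : m × n → R) :
    star ψ ⬝ᵥ (A ⊗ₖ (1 : Matrix n n R)) *ᵥ ψ =
      trace (A * (of (Function.curry ψ) * (of (Function.curry ψ))ᴴ)) := by
  simp only [dotProduct, mulVec, trace, diag, mul_apply, kroneckerMap_apply, one_apply,
    Fintype.sum_prod_type, conjTranspose_apply, of_apply, Function.curry_apply, Pi.star_apply,
    mul_ite, mul_one, mul_zero, ite_mul, zero_mul, Finset.sum_ite_eq, Finset.mem_univ, if_true,
    Finset.mul_sum]
  refine Finset.sum_congr rfl fun _ _ => ?_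
  rw [Finset.sum_comm]
  exact Finset.sum_congr rfl fun _ _ => Finset.sum_congr rfl fun _ _ => by ring

theorem sum_smul_vecMulVec_mul_conjTranspose [Fintype n] [Fintype ι] [DecidableEq ι]
    (c : ι → R) (α : ι → m → R) (β : ι → n → R)
    (hβ : ∀ i j, star (β i) ⬝ᵥ β j = if i = j then 1 else 0) :
    (∑ i, c i • vecMulVec (α i) (β i)) * (∑ i, c i • vecMulVec (α i) (β i))ᴴ =
      ∑ i, (c i * star (c i)) • vecMulVec (α i) (star (α i)) := by
  simp only [conjTranspose_sum, conjTranspose_smul, conjTranspose_vecMulVec, Matrix.sum_mul,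
    Matrix.mul_sum, Matrix.smul_mul, Matrix.mul_smul, vecMulVec_mul_vecMulVec, vecMulVec_smul]
  simp only [dotProduct_comm (β _), hβ, ite_smul, one_smul, zero_smul, smul_ite, smul_zero,
    Finset.sum_ite_eq, Finset.mem_univ, if_true, smul_smul, mul_comm (star (c _))]

end Matrix

theorem pure_state_trace_measured_general
    {ι : Type*} [Fintype ι] [DecidableEq ι]
    (s : ι → ℝ) (hs : ∀ i, 0 ≤ s i)
    (α : ι → ι → ℂ) (β : ι → ι → ℂ)
    (hβ : ∀ i j, star (β i) ⬝ᵥ β j = if i = j then 1 else 0)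
    (U : Matrix ι ι ℂ)
    (ψ : ι × ι → ℂ)
    (hψ : ψ = fun p => ∑ i, (Real.sqrt (s i) : ℂ) * α i p.1 * β i p.2)
    (ρ : Matrix (ι × ι) (ι × ι) ℂ) (hρ : ρ = vecMulVec ψ (star ψ))
    (ρa : Matrix ι ι ℂ) (hρa : ρa = ∑ i, (s i : ℂ) • vecMulVec (α i) (star (α i)))
    (P : ι → Matrix ι ι ℂ)
    (hP : ∀ k, P k = U * vecMulVec (α k) (star (α k)) * Uᴴ)
    (Pi : Matrix (ι × ι) (ι × ι) ℂ → Matrix (ι × ι) (ι × ι) ℂ)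
    (hPi : ∀ X, Pi X = ∑ k, (P k ⊗ₖ (1 : Matrix ι ι ℂ)) * X * (P k ⊗ₖ (1 : Matrix ι ι ℂ))) :
    (ρ * Pi ρ).trace = ∑ k, (star (α k) ⬝ᵥ (Uᴴ * ρa * U) *ᵥ α k) ^ 2 := by
  have hΨ : of (Function.curry ψ) = ∑ i, (Real.sqrt (s i) : ℂ) • vecMulVec (α i) (β i) := by
    ext a b
    simp only [hψ, of_apply, Function.curry_apply, Matrix.sum_apply, Matrix.smul_apply,
      vecMulVec_apply, smul_eq_mul, mul_assoc]
  have hsqrt : ∀ i, (Real.sqrt (s i) : ℂ) * star (Real.sqrt (s i) : ℂ) = s i := fun i => by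
    rw [Complex.star_def, Complex.conj_ofReal, ← Complex.ofReal_mul, Real.mul_self_sqrt (hs i)]
  have hreduced : of (Function.curry ψ) * (of (Function.curry ψ))ᴴ = ρa := by
    rw [hΨ, sum_smul_vecMulVec_mul_conjTranspose _ _ _ hβ, hρa]
    simp only [hsqrt]
  calc (ρ * Pi ρ).trace = ∑ k, (star ψ ⬝ᵥ (P k ⊗ₖ (1 : Matrix ι ι ℂ)) *ᵥ ψ) ^ 2 := by
        rw [hPi, hρ, Matrix.mul_sum, trace_sum]
        simp only [trace_vecMulVec_mul_mul_vecMulVec_mul]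
    _ = ∑ k, trace (P k * ρa) ^ 2 := by
        simp only [star_dotProduct_kronecker_one_mulVec, hreduced]
    _ = ∑ k, (star (α k) ⬝ᵥ (Uᴴ * ρa * U) *ᵥ α k) ^ 2 := by
        refine Finset.sum_congr rfl fun k _ => ?_
        rw [← trace_mul_vecMulVec, hP, trace_mul_comm (Uᴴ * ρa * U), Matrix.mul_assoc,
          Matrix.mul_assoc, trace_mul_comm U]
        simp only [Matrix.mul_assoc]

/-- For a bipartite pure state `|ψ⟩ = Σ_i √s_i |α_i⟩⊗|β_i⟩` in Schmidt form and any
unitary `U` on `H_a`, with measurement projectors `Π_k = U|α_k⟩⟨α_k|U†`,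
`tr(ρ · Π(ρ)) = Σ_k (⟨α_k|U† ρ_a U|α_k⟩)²` where `ρ = |ψ⟩⟨ψ|` and
`ρ_a = Σ_i s_i |α_i⟩⟨α_i|`. -/
theorem pure_state_trace_measured
    {ι : Type*} [Fintype ι] [DecidableEq ι]
    (s : ι → ℝ) (hs : ∀ i, 0 ≤ s i) (hsum : ∑ i, s i = 1)
    (α : ι → ι → ℂ) (β : ι → ι → ℂ)
    (hα : ∀ i j, star (α i) ⬝ᵥ α j = if i = j then 1 else 0)
    (hβ : ∀ i j, star (β i) ⬝ᵥ β j = if i = j then 1 else 0)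
    (U : Matrix ι ι ℂ) (hU : U ∈ Matrix.unitaryGroup ι ℂ)
    (ψ : ι × ι → ℂ)
    (hψ : ψ = fun p => ∑ i, (Real.sqrt (s i) : ℂ) * α i p.1 * β i p.2)
    (ρ : Matrix (ι × ι) (ι × ι) ℂ) (hρ : ρ = vecMulVec ψ (star ψ))
    (ρa : Matrix ι ι ℂ) (hρa : ρa = ∑ i, (s i : ℂ) • vecMulVec (α i) (star (α i)))
    (P : ι → Matrix ι ι ℂ)
    (hP : ∀ k, P k = U * vecMulVec (α k) (star (α k)) * Uᴴ)
    (Pi : Matrix (ι × ι) (ι × ι) ℂ → Matrix (ι × ι) (ι × ι) ℂ)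
    (hPi : ∀ X, Pi X = ∑ k, (P k ⊗ₖ (1 : Matrix ι ι ℂ)) * X * (P k ⊗ₖ (1 : Matrix ι ι ℂ))) :
    (ρ * Pi ρ).trace = ∑ k, (star (α k) ⬝ᵥ (Uᴴ * ρa * U) *ᵥ α k) ^ 2 :=
  pure_state_trace_measured_general s hs α β hβ U ψ hψ ρ hρ ρa hρa P hP Pi hPi
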